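/- arXiv:2412.08539 — 7 statements merged into one kernel-verified Lean document; each statement's English description precedes it below -/
import Mathlib

section
/- Let N ≤ H and C be subgroups of a finite group G, and let θ be an irreducible character of N. If the restriction of θ to N ∩ C contains the trivial character, then the restriction of Ind_N^H θ to H ∩ C contains the trivial character. -/
open scoped BigOperators Classical

lemma sum_dite_subtype {α : Type*} [Fintype α] (p : α → Prop) (f : ∀ x, p x → ℂ) :
    ∑ x : α, (if h : p x then f x h else 0) = ∑ x : {x // p x}, f x.1 x.2 := by
  rw [Finset.sum_dite]
  simp only [Finset.sum_const_zero, add_zero]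
  exact Fintype.sum_equiv (Equiv.subtypeEquivRight (by simp)) _ _ (fun x => rfl)

open CategoryTheory in
lemma char_sum_nonneg (N : Type) [Group N] [Fintype N] (θ : N → ℂ)
    (hθ : ∃ V : FDRep ℂ N, θ = fun g => V.character g) (D : Subgroup N) :
    ∃ r : ℝ, 0 ≤ r ∧ ∑ n : N, (if (n : N) ∈ D then θ n else 0) = r := by
  obtain ⟨V, rfl⟩ := hθ
  have h1 : ∑ n : N, (if (n : N) ∈ D then V.character n else 0)
      = ∑ k : D, V.character (k : N) := by
    rw [show ∑ n : N, (if (n:N) ∈ D then V.character n else 0)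
      = ∑ n : N, (if h : (n:N) ∈ D then V.character n else 0) by
        refine Finset.sum_congr rfl fun n _ => ?_
        split <;> simp_all]
    exact sum_dite_subtype _ _
  set W : FDRep ℂ D := FDRep.of (V.ρ.comp D.subtype) with hW
  have hchar : ∀ k : D, V.character (k : N) = W.character k := fun k => rfl
  have hcard : (Fintype.card D : ℂ) ≠ 0 := Nat.cast_ne_zero.mpr Fintype.card_ne_zero
  have : Invertible (Fintype.card D : ℂ) := invertibleOfNonzero hcard
  have h2 := FDRep.average_char_eq_finrank_invariants W
  have h3 : ∑ k : D, W.character k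
      = (Fintype.card D : ℂ) * (Module.finrank ℂ (Representation.invariants W.ρ) : ℂ) := by
    rw [← h2, Nat.card_eq_fintype_card, ← mul_assoc, mul_inv_cancel₀ hcard, one_mul]
  refine ⟨(Fintype.card D) * (Module.finrank ℂ (Representation.invariants W.ρ)), by positivity, ?_⟩
  rw [h1]
  simp only [hchar]
  rw [h3]
  push_cast
  ring


open CategoryTheory in
/-- `χ` is the character of an irreducible complex representation of `G`. -/
def IsIrrChar (G : Type) [Group G] [Fintype G] (χ : G → ℂ) : Prop :=
  ∃ V : FDRep ℂ G, Simple V ∧ χ = fun g => V.character g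

/-- The character of `G` induced from the character `σ` of the subgroup `H`. -/
noncomputable def indChar {G : Type} [Group G] [Fintype G] (H : Subgroup G)
    (σ : H → ℂ) (g : G) : ℂ :=
  (Fintype.card H : ℂ)⁻¹ * ∑ x : G, if h : x⁻¹ * g * x ∈ H then σ ⟨x⁻¹ * g * x, h⟩ else 0

/-- If `θ|_{N ∩ C}` contains the trivial character, then `(Ind_N^H θ)|_{H ∩ C}` contains the
trivial character. -/
theorem stmt2 (G : Type) [Group G] [Fintype G] (N H C : Subgroup G) (hNH : N ≤ H)
    (θ : ↥N → ℂ) (hθ : IsIrrChar ↥N θ)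
    (h1 : (∑ x : ↥N, if (x : G) ∈ C then θ x else 0) ≠ 0) :
    (∑ x : ↥H, if (x : G) ∈ C then
        indChar (N.subgroupOf H) (fun n => θ ⟨n.1.1, Subgroup.mem_subgroupOf.mp n.2⟩) x
      else 0) ≠ 0 := by
  set c : ℂ := (Fintype.card (N.subgroupOf H) : ℂ) with hc
  set Θ : G → ℂ := fun g => if h : g ∈ N then θ ⟨g, h⟩ else 0 with hΘ
  set F : H → ℂ := fun y => ∑ n : N, if (y : G) * n * (y : G)⁻¹ ∈ C then θ n else 0 with hF
  -- Step 1 : rewrite the LHS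
  have step1 : (∑ x : ↥H, if (x : G) ∈ C then
        indChar (N.subgroupOf H) (fun n => θ ⟨n.1.1, Subgroup.mem_subgroupOf.mp n.2⟩) x
      else 0) = c⁻¹ * ∑ y : H, F y := by
    have e1 : ∀ x : H, (if (x : G) ∈ C then
        indChar (N.subgroupOf H) (fun n => θ ⟨n.1.1, Subgroup.mem_subgroupOf.mp n.2⟩) x
      else 0) = c⁻¹ * ∑ y : H, (if (x:G) ∈ C then Θ ((y:G)⁻¹ * x * y) else 0) := by
      intro x
      by_cases hx : (x:G) ∈ C
      · simp only [hx, if_true, indChar]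
        rw [← hc]
        congr 1
      · simp [hx]
    rw [Finset.sum_congr rfl fun x _ => e1 x, ← Finset.mul_sum]
    congr 1
    rw [Finset.sum_comm]
    refine Finset.sum_congr rfl fun y _ => ?_
    -- reindex x ↦ y z y⁻¹
    rw [Fintype.sum_equiv ((MulAut.conj y⁻¹).toEquiv) _
      (fun z : H => if ((y : G) * z * (y:G)⁻¹) ∈ C then Θ (z : G) else 0) ?_]
    · -- now sum over z : H of indicator = F y
      have : ∀ z : H, (if ((y : G) * z * (y:G)⁻¹) ∈ C then Θ (z : G) else 0)
          = (if h : (z : G) ∈ N then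
              (if ((y : G) * z * (y:G)⁻¹) ∈ C then θ ⟨z, h⟩ else 0) else 0) := by
        intro z
        by_cases h : (z : G) ∈ N <;> by_cases h2 : ((y : G) * z * (y:G)⁻¹) ∈ C <;>
          simp [hΘ, h, h2]
      rw [Finset.sum_congr rfl fun z _ => this z, sum_dite_subtype]
      rw [hF]
      refine Fintype.sum_equiv ⟨fun w => ⟨w.1.1, w.2⟩, fun n => ⟨⟨n.1, hNH n.2⟩, n.2⟩,
        fun w => rfl, fun n => rfl⟩ _ _ fun w => rfl
    · intro x
      simp only [MulEquiv.toEquiv_eq_coe, Equiv.coe_fn_mk, MulEquiv.coe_toEquiv]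
      have hx' : (((MulAut.conj y⁻¹) x : H) : G) = (y:G)⁻¹ * x * y := by
        simp [MulAut.conj_apply, mul_assoc]
      rw [hx']
      have h2' : (y:G) * ((y:G)⁻¹ * x * y) * (y:G)⁻¹ = (x : G) := by group
      rw [h2']
  rw [step1]
  -- Step 2 : each F y is a nonneg real
  have hθ' : ∃ V : FDRep ℂ N, θ = fun g => V.character g := by
    obtain ⟨V, _, hV⟩ := hθ; exact ⟨V, hV⟩
  have step2 : ∀ y : H, ∃ r : ℝ, 0 ≤ r ∧ F y = r := by
    intro y
    obtain ⟨r, hr, hsum⟩ := char_sum_nonneg N θ hθ'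
      ((C.comap (MulAut.conj (y:G)).toMonoidHom).subgroupOf N)
    refine ⟨r, hr, ?_⟩
    rw [← hsum, hF]
    refine Finset.sum_congr rfl fun n _ => ?_
    exact if_congr (by simp [Subgroup.mem_subgroupOf, Subgroup.mem_comap,
      MulAut.conj_apply]) rfl rfl
  choose r hr0 hrF using step2
  -- Step 3 : F 1 ≠ 0
  have hF1 : F 1 ≠ 0 := by
    rw [hF]
    simpa using h1
  have hr1 : 0 < r 1 := by
    rcases lt_or_eq_of_le (hr0 1) with h | h
    · exact h
    · exfalso; apply hF1; rw [hrF 1, ← h]; norm_num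
  -- Conclusion
  have hsum : ∑ y : H, F y = ((∑ y : H, r y : ℝ) : ℂ) := by
    push_cast
    exact Finset.sum_congr rfl fun y _ => hrF y
  rw [hsum]
  have hpos : 0 < ∑ y : H, r y :=
    Finset.sum_pos' (fun y _ => hr0 y) ⟨1, Finset.mem_univ _, hr1⟩
  have hcne : c ≠ 0 := by
    rw [hc]; exact Nat.cast_ne_zero.mpr Fintype.card_ne_zero
  exact mul_ne_zero (inv_ne_zero hcne) (by exact_mod_cast hpos.ne')
end

section
/- Let G be a finite group with centre Z, N a normal subgroup of G, Z' ≤ Z, σ ∈ Irr(N), and ρ ∈ Irr(G) lying above σ with ρ trivial on Z'. If there exists g ∈ N such that ρ restricted to C_G(g) contains the trivial character, then there exists h ∈ N such that σ restricted to C_N(h) contains the trivial character. -/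
open scoped BigOperators Classical

section Aux


open CategoryTheory Module Polynomial

lemma my_char_inv {G : Type} [Group G] [Fintype G] (V : FDRep ℂ G) (g : G) :
    V.character g⁻¹ = starRingEnd ℂ (V.character g) := by
  classical
  set n := Fintype.card G with hn
  have hn0 : n ≠ 0 := Fintype.card_ne_zero
  set A : Module.End ℂ V := V.ρ g with hA
  set B : Module.End ℂ V := V.ρ g⁻¹ with hB
  have hAB : A * B = 1 := by rw [hA, hB, ← map_mul, mul_inv_cancel, map_one]
  have hBA : B * A = 1 := by rw [hA, hB, ← map_mul, inv_mul_cancel, map_one]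
  have hApow : A ^ n = 1 := by rw [hA, ← map_pow, pow_card_eq_one, map_one]
  have hind := Module.End.eigenspaces_iSupIndep A
  have hsf : Squarefree ((X : ℂ[X]) ^ n - C 1) :=
    (Polynomial.separable_X_pow_sub_C (1 : ℂ)
      (by exact_mod_cast (Nat.cast_ne_zero (R := ℂ)).mpr hn0) one_ne_zero).squarefree
  have haev : Polynomial.aeval A ((X : ℂ[X]) ^ n - C 1) = 0 := by
    simp [hApow]
  have hss : A.IsSemisimple :=
    Module.End.isSemisimple_of_squarefree_aeval_eq_zero hsf haev
  have htop : ⨆ μ : ℂ, A.eigenspace μ = ⊤ := by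
    have h1 := Module.End.iSup_maxGenEigenspace_eq_top A
    simpa [hss.isFinitelySemisimple.maxGenEigenspace_eq_eigenspace] using h1
  have hint : DirectSum.IsInternal (fun μ : ℂ => A.eigenspace μ) :=
    DirectSum.isInternal_submodule_of_iSupIndep_of_iSup_eq_top hind htop
  have hroot : ∀ μ : ℂ, A.eigenspace μ ≠ ⊥ → μ ^ n = 1 := by
    intro μ hμ
    obtain ⟨v, hv, hv0⟩ := Submodule.exists_mem_ne_zero_of_ne_bot hμ
    have hev : A.HasEigenvector μ v := ⟨hv, hv0⟩
    have h1 : (A ^ n) v = μ ^ n • v := Module.End.HasEigenvector.pow_apply hev n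
    rw [hApow] at h1
    have h2 : (μ ^ n - 1) • v = 0 := by
      rw [sub_smul, one_smul, ← h1]; simp
    have := (smul_eq_zero.mp h2).resolve_right hv0
    linear_combination this
  have hfin : {μ : ℂ | A.eigenspace μ ≠ ⊥}.Finite := by
    apply Set.Finite.subset (Polynomial.nthRootsFinset n (1 : ℂ)).finite_toSet
    intro μ hμ
    exact (Polynomial.mem_nthRootsFinset (Nat.pos_of_ne_zero hn0) (1 : ℂ)).mpr (hroot μ hμ)
  have hMA : ∀ μ : ℂ, Set.MapsTo A (A.eigenspace μ) (A.eigenspace μ) := by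
    intro μ x hx
    have hx' := Module.End.mem_eigenspace_iff.mp hx
    exact Module.End.mem_eigenspace_iff.mpr (by rw [hx']; simp [map_smul, hx'])
  have hMB : ∀ μ : ℂ, Set.MapsTo B (A.eigenspace μ) (A.eigenspace μ) := by
    intro μ x hx
    have hx' := Module.End.mem_eigenspace_iff.mp hx
    refine Module.End.mem_eigenspace_iff.mpr ?_
    have h1 : A (B x) = x := by simpa using LinearMap.congr_fun hAB x
    have h2 : B (A x) = x := by simpa using LinearMap.congr_fun hBA x
    have h3 : μ • B x = x := by rw [← B.map_smul μ x, ← hx']; exact h2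
    rw [h1, h3]
  have htrA : LinearMap.trace ℂ V A
      = ∑ μ ∈ hfin.toFinset, μ * (finrank ℂ (A.eigenspace μ) : ℂ) := by
    rw [LinearMap.trace_eq_sum_trace_restrict' hint hfin hMA]
    refine Finset.sum_congr rfl fun μ hμ => ?_
    have : A.restrict (hMA μ) = (μ : ℂ) • (LinearMap.id : A.eigenspace μ →ₗ[ℂ] A.eigenspace μ) := by
      ext ⟨x, hx⟩
      have hx' := Module.End.mem_eigenspace_iff.mp hx
      simp [LinearMap.restrict_apply, hx']; exact hx'
    rw [this, map_smul, LinearMap.trace_id]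
    simp [mul_comm]
  have htrB : LinearMap.trace ℂ V B
      = ∑ μ ∈ hfin.toFinset, μ⁻¹ * (finrank ℂ (A.eigenspace μ) : ℂ) := by
    rw [LinearMap.trace_eq_sum_trace_restrict' hint hfin hMB]
    refine Finset.sum_congr rfl fun μ hμ => ?_
    have hμne : A.eigenspace μ ≠ ⊥ := by simpa using (Set.Finite.mem_toFinset hfin).mp hμ
    have hμ0 : μ ≠ 0 := by
      intro h0
      have := hroot μ hμne
      rw [h0] at this
      simp [zero_pow hn0] at this
    have : B.restrict (hMB μ) = (μ⁻¹ : ℂ) • (LinearMap.id : A.eigenspace μ →ₗ[ℂ] A.eigenspace μ) := by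
      ext ⟨x, hx⟩
      have hx' := Module.End.mem_eigenspace_iff.mp hx
      have h2 : B (A x) = x := by simpa using LinearMap.congr_fun hBA x
      have h3 : μ • B x = x := by rw [← B.map_smul μ x, ← hx']; exact h2
      have h4 : B x = μ⁻¹ • x := by
        have h5 := congrArg (fun y => μ⁻¹ • y) h3
        simpa [smul_smul, inv_mul_cancel₀ hμ0] using h5
      simp [LinearMap.restrict_apply, h4]; exact h4
    rw [this, map_smul, LinearMap.trace_id]
    simp [mul_comm]
  have hconj : ∀ μ ∈ hfin.toFinset, starRingEnd ℂ μ = μ⁻¹ := by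
    intro μ hμ
    have hμne : A.eigenspace μ ≠ ⊥ := by simpa using (Set.Finite.mem_toFinset hfin).mp hμ
    have h := hroot μ hμne
    have habs : ‖μ‖ = 1 := by
      have h1 : ‖μ‖ ^ n = 1 := by rw [← norm_pow, h, norm_one]
      have h2 := norm_nonneg μ
      rcases pow_eq_one_iff_cases.mp h1 with h3 | h3 | h3
      · omega
      · exact h3
      · nlinarith [h3.1]
    rw [← Complex.inv_eq_conj habs]
  show LinearMap.trace ℂ V B = starRingEnd ℂ (LinearMap.trace ℂ V A)
  rw [htrA, htrB, map_sum]
  refine Finset.sum_congr rfl fun μ hμ => ?_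
  rw [map_mul, hconj μ hμ]
  congr 1
  simp

lemma my_sum_ite_subgroup {Γ : Type} [Group Γ] [Fintype Γ] (K : Subgroup Γ) (f : Γ → ℂ) :
    (∑ x : Γ, if x ∈ K then f x else 0) = ∑ y : ↥K, f ↑y := by
  rw [← Finset.sum_filter]
  exact Finset.sum_subtype _ (fun x => by simp) f

lemma my_sum_char_eq {H : Type} [Group H] [Fintype H] (X : FDRep ℂ H) :
    (∑ h : H, X.character h)
      = (Fintype.card H : ℂ) * (finrank ℂ (Representation.invariants X.ρ) : ℂ) := by
  have hc : (Fintype.card H : ℂ) ≠ 0 := by exact_mod_cast Fintype.card_ne_zero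
  haveI : Invertible (Fintype.card H : ℂ) := invertibleOfNonzero hc
  have h := FDRep.average_char_eq_finrank_invariants X
  rw [Nat.card_eq_fintype_card] at h
  have h2 := congrArg (fun z => (Fintype.card H : ℂ) * z) h
  simp only [← mul_assoc, mul_inv_cancel₀ hc, one_mul] at h2
  exact h2

lemma my_exists_invariant {H : Type} [Group H] [Fintype H] (X : FDRep ℂ H)
    (h : (∑ h : H, X.character h) ≠ 0) :
    ∃ v : X, v ≠ 0 ∧ ∀ h : H, X.ρ h v = v := by
  rw [my_sum_char_eq] at h
  have hfr : finrank ℂ (Representation.invariants X.ρ) ≠ 0 := by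
    intro h0; rw [h0] at h; simp at h
  have hbot : Representation.invariants X.ρ ≠ ⊥ := by
    intro h0; rw [h0] at hfr; simp at hfr
  obtain ⟨v, hv, hv0⟩ := Submodule.exists_mem_ne_zero_of_ne_bot hbot
  exact ⟨v, hv0, (Representation.mem_invariants _ v).mp hv⟩

lemma my_sum_char_ne_zero {H : Type} [Group H] [Fintype H] (X : FDRep ℂ H)
    (v : X) (hv : v ≠ 0) (hinv : ∀ h : H, X.ρ h v = v) :
    (∑ h : H, X.character h) ≠ 0 := by
  rw [my_sum_char_eq]
  have hc : (Fintype.card H : ℂ) ≠ 0 := by exact_mod_cast Fintype.card_ne_zero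
  have hbot : Representation.invariants X.ρ ≠ ⊥ := by
    intro h0
    have hm : v ∈ Representation.invariants X.ρ := (Representation.mem_invariants _ v).mpr hinv
    rw [h0] at hm
    exact hv (by simpa using hm)
  have hfr : finrank ℂ (Representation.invariants X.ρ) ≠ 0 := by
    rwa [ne_eq, Submodule.finrank_eq_zero]
  exact mul_ne_zero hc (by exact_mod_cast hfr)

lemma my_exists_hom {H : Type} [Group H] [Fintype H] (X Y : FDRep ℂ H)
    (hs : (∑ h : H, X.character h * Y.character h⁻¹) ≠ 0) :
    ∃ φ : (Y : Type) →ₗ[ℂ] (X : Type), φ ≠ 0 ∧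
      ∀ (h : H) (y : Y), φ (Y.ρ h y) = X.ρ h (φ y) := by
  have hsum : (∑ h : H, (FDRep.of (Representation.linHom Y.ρ X.ρ)).character h) ≠ 0 := by
    convert hs using 2 with h
    rw [mul_comm, ← FDRep.char_dual, ← Pi.mul_apply, ← FDRep.char_tensor,
      FDRep.char_iso (FDRep.dualTensorIsoLinHom Y.ρ X)]
  obtain ⟨φ, hφ0, hφ⟩ := my_exists_invariant _ hsum
  refine ⟨φ, hφ0, fun h y => ?_⟩
  have h1 : (Representation.linHom Y.ρ X.ρ) h φ = φ := hφ h
  rw [Representation.linHom_apply] at h1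
  have h2 := LinearMap.congr_fun h1 (Y.ρ h y)
  simp only [LinearMap.comp_apply] at h2
  have h4 : Y.ρ h⁻¹ * Y.ρ h = 1 := by rw [← map_mul, inv_mul_cancel, map_one]
  have h3 : Y.ρ h⁻¹ (Y.ρ h y) = y := by simpa using LinearMap.congr_fun h4 y
  rw [← h2, h3]

lemma my_subrep_top {H : Type} [Group H] (V : FDRep ℂ H) (hs : Simple V)
    (U : Submodule ℂ V) (hinv : ∀ (h : H), ∀ x ∈ U, V.ρ h x ∈ U) (hbot : U ≠ ⊥) :
    U = ⊤ := by
  classical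
  let ρU : Representation ℂ H U :=
    { toFun := fun h => (V.ρ h).restrict (fun x hx => hinv h x hx)
      map_one' := by ext x; simp [LinearMap.restrict_apply]
      map_mul' := fun a b => by ext x; simp [LinearMap.restrict_apply] }
  let Wr : FDRep ℂ H := FDRep.of ρU
  let ι : Wr ⟶ V :=
    { hom := ConcreteCategory.ofHom U.subtype
      comm := fun h => by
        ext x
        rfl }
  have hinj : Function.Injective ι.hom := Subtype.val_injective
  haveI : Mono ι := by
    constructor
    intro Z f g hfg
    ext x
    have := congrArg (fun q => q.hom x) hfg
    simp only [Action.comp_hom] at this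
    exact congrArg Subtype.val (hinj this)
  have hne : ι ≠ 0 := by
    intro h0
    obtain ⟨u, hu, hu0⟩ := Submodule.exists_mem_ne_zero_of_ne_bot hbot
    have : ι.hom ⟨u, hu⟩ = 0 := by rw [h0]; rfl
    exact hu0 this
  haveI : IsIso ι := (hs.mono_isIso_iff_nonzero ι).mpr hne
  have hsurj : Function.Surjective ι.hom := by
    intro v
    refine ⟨(inv ι).hom v, ?_⟩
    have h2 : ι.hom ((inv ι).hom v) = ((inv ι ≫ ι).hom v) := rfl
    rw [h2, IsIso.inv_hom_id]
    rfl
  rw [eq_top_iff]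
  intro v _
  obtain ⟨u, hu⟩ := hsurj v
  rw [← hu]
  exact u.2

end Aux

/-- Let `N ⊴ G`, `Z' ≤ Z(G)`, `σ ∈ Irr(N)` and `ρ ∈ Irr(G)` lying above `σ` with `ρ`
trivial on `Z'`. If `ρ` restricted to some `C_G(g)` with `g ∈ N` contains the trivial
character, then `σ` restricted to some `C_N(h)` with `h ∈ N` contains the trivial
character. -/
theorem stmt4 (G : Type) [Group G] [Fintype G] (N : Subgroup G) [N.Normal]
    (Z' : Subgroup G) (hZ' : Z' ≤ Subgroup.center G)
    (σ : ↥N → ℂ) (hσ : IsIrrChar ↥N σ) (ρ : G → ℂ) (hρ : IsIrrChar G ρ)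
    (habove : (∑ x : ↥N, ρ (x : G) * (starRingEnd ℂ) (σ x)) ≠ 0)
    (htriv : ∀ z ∈ Z', ρ z = ρ 1)
    (hex : ∃ g ∈ N, (∑ h : G, if h ∈ Subgroup.centralizer {g} then ρ h else 0) ≠ 0) :
    ∃ h ∈ N, (∑ x : ↥N, if (x : G) ∈ Subgroup.centralizer {h} then σ x else 0) ≠ 0 := by
  classical
  obtain ⟨V, hVs, hρc⟩ := hρ
  obtain ⟨W, hWs, hσc⟩ := hσ
  simp only [hρc, hσc] at habove hex ⊢
  clear hρc hσc htriv
  -- Step 1: an invariant vector for the centralizer of g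
  obtain ⟨g, hgN, hgsum⟩ := hex
  set Cg := Subgroup.centralizer ({g} : Set G) with hCgdef
  have hgs2 : (∑ y : ↥Cg, (FDRep.of (V.ρ.comp Cg.subtype)).character y) ≠ 0 := by
    have h1 := my_sum_ite_subgroup Cg (fun h => V.character h)
    rw [h1] at hgsum
    exact hgsum
  obtain ⟨v, hv0, hv⟩ := my_exists_invariant _ hgs2
  -- Step 2: a nonzero equivariant map from Res_N V to W
  set ResN : FDRep ℂ ↥N := FDRep.of (V.ρ.comp N.subtype) with hResNdef
  have hab : (∑ x : ↥N, W.character x * ResN.character x⁻¹) ≠ 0 := by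
    intro h0
    apply habove
    have hc : ∀ x : ↥N, V.character (x : G) * starRingEnd ℂ (W.character x)
        = starRingEnd ℂ (W.character x * ResN.character x⁻¹) := by
      intro x
      rw [map_mul]
      have h1 : ResN.character x⁻¹ = V.character ((x : G))⁻¹ := rfl
      rw [h1, my_char_inv, Complex.conj_conj]
      ring
    rw [Finset.sum_congr rfl (fun x _ => hc x), ← map_sum, h0, map_zero]
  obtain ⟨φ, hφ0, hφ⟩ := my_exists_hom W ResN hab
  -- Step 3: span of the orbit of v is everything
  set U : Submodule ℂ V := Submodule.span ℂ (Set.range fun x : G => V.ρ x v) with hUdef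
  have hUinv : ∀ (h : G), ∀ u ∈ U, V.ρ h u ∈ U := by
    intro h u hu
    have hmap : Submodule.map (V.ρ h) U ≤ U := by
      rw [hUdef, Submodule.map_span]
      apply Submodule.span_le.mpr
      rintro _ ⟨_, ⟨x, rfl⟩, rfl⟩
      apply Submodule.subset_span
      exact ⟨h * x, by simp [map_mul]⟩
    exact hmap ⟨u, hu, rfl⟩
  have hUbot : U ≠ ⊥ := by
    intro h0
    apply hv0
    have hvU : v ∈ U := by
      apply Submodule.subset_span
      exact ⟨1, by simp⟩
    rw [h0] at hvU
    simpa using hvU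
  have hUtop : U = ⊤ := my_subrep_top V hVs U hUinv hUbot
  -- Step 4: find x0 with φ (ρ x0 v) ≠ 0
  have hx0 : ∃ x0 : G, φ (V.ρ x0 v) ≠ 0 := by
    by_contra h0
    push_neg at h0
    apply hφ0
    apply LinearMap.ext
    intro u
    have hu : u ∈ U := by rw [hUtop]; trivial
    rw [hUdef] at hu
    induction hu using Submodule.span_induction with
    | mem x hx => obtain ⟨x0, rfl⟩ := hx; simpa using h0 x0
    | zero => simp
    | add a b _ _ ha hb => simp [map_add, ha, hb]
    | smul c a _ ha => simp [map_smul, ha]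
  obtain ⟨x0, hw0⟩ := hx0
  set w := φ (V.ρ x0 v) with hwdef
  -- Step 5: conclude with h = x0 * g * x0⁻¹
  have hhN : x0 * g * x0⁻¹ ∈ N := Subgroup.Normal.conj_mem ‹N.Normal› g hgN x0
  refine ⟨x0 * g * x0⁻¹, hhN, ?_⟩
  set K : Subgroup ↥N :=
    Subgroup.comap N.subtype (Subgroup.centralizer {x0 * g * x0⁻¹}) with hKdef
  have hsum_eq : (∑ x : ↥N,
      if (x : G) ∈ Subgroup.centralizer {x0 * g * x0⁻¹} then W.character x else 0)
      = ∑ y : ↥K, W.character ↑y := by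
    rw [← my_sum_ite_subgroup K (fun x => W.character x)]
    refine Finset.sum_congr rfl fun x _ => ?_
    congr 1
  rw [hsum_eq]
  have hres : (∑ y : ↥K, W.character ↑y)
      = ∑ y : ↥K, (FDRep.of (W.ρ.comp K.subtype)).character y := rfl
  rw [hres]
  apply my_sum_char_ne_zero (FDRep.of (W.ρ.comp K.subtype)) w hw0
  intro y
  -- y : ↥K; show W.ρ ↑y w = w
  show W.ρ (y : ↥N) w = w
  have hcomm : (x0 * g * x0⁻¹) * (((y : ↥N) : G)) = (((y : ↥N) : G)) * (x0 * g * x0⁻¹) := by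
    have h2 := Subgroup.mem_centralizer_iff.mp (Subgroup.mem_comap.mp y.2)
    exact h2 (x0 * g * x0⁻¹) rfl
  set nn : G := ((y : ↥N) : G) with hnn
  have hcg : x0⁻¹ * nn * x0 ∈ Cg := by
    rw [hCgdef]
    apply Subgroup.mem_centralizer_iff.mpr
    intro a ha
    rw [Set.mem_singleton_iff] at ha
    rw [ha]
    have e1 : g * (x0⁻¹ * nn * x0) = x0⁻¹ * ((x0 * g * x0⁻¹) * nn) * x0 := by group
    have e2 : (x0⁻¹ * nn * x0) * g = x0⁻¹ * (nn * (x0 * g * x0⁻¹)) * x0 := by group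
    rw [e1, hcomm, ← e2]
  have hvc : V.ρ (x0⁻¹ * nn * x0) v = v := hv ⟨x0⁻¹ * nn * x0, hcg⟩
  have hstep : V.ρ nn (V.ρ x0 v) = V.ρ x0 v := by
    have h1 : V.ρ nn (V.ρ x0 v) = V.ρ (nn * x0) v := by
      rw [map_mul]; rfl
    have h2 : nn * x0 = x0 * (x0⁻¹ * nn * x0) := by group
    rw [h1, h2, map_mul]
    show V.ρ x0 (V.ρ (x0⁻¹ * nn * x0) v) = V.ρ x0 v
    rw [hvc]
  calc W.ρ (y : ↥N) w = W.ρ (y : ↥N) (φ (V.ρ x0 v)) := rfl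
    _ = φ (ResN.ρ (y : ↥N) (V.ρ x0 v)) := (hφ (y : ↥N) (V.ρ x0 v)).symm
    _ = φ (V.ρ nn (V.ρ x0 v)) := rfl
    _ = φ (V.ρ x0 v) := by rw [hstep]
    _ = w := rfl
end

section
/- Every irreducible complex character of GL₂(𝔽_q) that is trivial on the centre is a constituent of the conjugation character of GL₂(𝔽_q). -/
open scoped BigOperators Classical

/-- The conjugation character of a finite group: its value at `g` is the number of
fixed points of conjugation by `g`. -/
noncomputable def conjChar (G : Type) [Group G] [Fintype G] (g : G) : ℂ :=
  (Nat.card {x : G // g * x * g⁻¹ = x} : ℂ)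

namespace Stmt6Aux

open Matrix CategoryTheory Module
set_option linter.unusedSectionVars false
set_option maxHeartbeats 1000000

/-! ### General character-theoretic lemmas -/

section General

variable {G : Type} [Group G] [Fintype G]

lemma sum_char_subgroup (V : FDRep ℂ G) (H : Subgroup G) :
    ∑ h : H, V.character (h : G)
      = (Nat.card H : ℂ) *
        (finrank ℂ (Representation.invariants (V.ρ.comp H.subtype)) : ℂ) := by
  have hc : (Fintype.card H : ℂ) ≠ 0 := Nat.cast_ne_zero.mpr Fintype.card_ne_zero
  have : Invertible (Fintype.card H : ℂ) := invertibleOfNonzero hc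
  have h := FDRep.average_char_eq_finrank_invariants (FDRep.of (V.ρ.comp H.subtype))
  have hρ : (FDRep.of (V.ρ.comp H.subtype)).ρ = V.ρ.comp H.subtype := FDRep.of_ρ' _
  rw [hρ] at h
  have hch : ∀ h : H, (FDRep.of (V.ρ.comp H.subtype)).character h = V.character (h : G) := by
    intro h; rfl
  rw [Finset.sum_congr rfl (fun h _ => (hch h).symm)]
  rw [inv_mul_eq_iff_eq_mul₀ (by simpa [Nat.card_eq_fintype_card] using hc)] at h
  rw [h]
  try rfl

lemma finrank_pos_of_simple (V : FDRep ℂ G) (h : Simple V) : 0 < finrank ℂ V := by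
  by_contra hn
  push_neg at hn
  have h0 : finrank ℂ V = 0 := Nat.le_zero.mp hn
  have hss : Subsingleton V := (Module.finrank_zero_iff (R := ℂ) (M := V)).mp h0
  have : (𝟙 V : V ⟶ V) = 0 := by
    ext v
    exact @Subsingleton.elim _ hss _ _
  exact (CategoryTheory.id_nonzero V) this

lemma central_trivial (V : FDRep ℂ G)
    (htriv : ∀ z ∈ Subgroup.center G, V.character z = V.character 1) :
    ∀ z ∈ Subgroup.center G, ∀ v : V, V.ρ z v = v := by
  set H := Subgroup.center G with hH
  have hs := sum_char_subgroup V H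
  have hcongr : ∀ h : H, V.character (h : G) = (finrank ℂ V : ℂ) := by
    intro h
    rw [htriv _ h.2, FDRep.char_one]
  simp only [hcongr] at hs
  simp only [Finset.sum_const, Finset.card_univ, nsmul_eq_mul] at hs
  simp only [← Nat.card_eq_fintype_card] at hs
  have hc : ((Nat.card H : ℕ) : ℂ) ≠ 0 := Nat.cast_ne_zero.mpr Nat.card_pos.ne'
  have heq : ((finrank ℂ V : ℕ) : ℂ)
      = ((finrank ℂ (Representation.invariants (V.ρ.comp H.subtype)) : ℕ) : ℂ) :=
    mul_left_cancel₀ hc hs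
  have heqn : finrank ℂ (Representation.invariants (V.ρ.comp H.subtype)) = finrank ℂ V :=
    (Nat.cast_injective heq).symm
  have htop : Representation.invariants (V.ρ.comp H.subtype) = ⊤ :=
    Submodule.eq_top_of_finrank_eq heqn
  intro z hz v
  have hv : v ∈ Representation.invariants (V.ρ.comp H.subtype) := by
    rw [htop]; trivial
  exact hv ⟨z, hz⟩

/-- The key counting argument: if some centralizer has a nonzero invariant vector, then the
inner product of the conjugation character with the character is nonzero. -/
theorem final (V : FDRep ℂ G)
    (hx : ∃ x : G, ∃ v : V, v ≠ 0 ∧ ∀ g ∈ Subgroup.centralizer {x}, V.ρ g v = v) :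
    (∑ g : G, conjChar G g * (starRingEnd ℂ) (V.character g)) ≠ 0 := by
  set n : G → ℕ := fun x => Nat.card (Subgroup.centralizer {x}) *
      finrank ℂ (Representation.invariants (V.ρ.comp (Subgroup.centralizer {x}).subtype))
    with hn
  have key : (∑ g : G, conjChar G g * (starRingEnd ℂ) (V.character g))
      = ((∑ x : G, n x : ℕ) : ℂ) := by
    have h1 : ∀ g : G, conjChar G g = ∑ x : G, if g * x * g⁻¹ = x then (1:ℂ) else 0 := by
      intro g
      rw [conjChar, Nat.card_eq_fintype_card, Fintype.card_subtype, Finset.card_filter]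
      push_cast
      rfl
    calc ∑ g : G, conjChar G g * (starRingEnd ℂ) (V.character g)
        = ∑ g : G, ∑ x : G,
            (if g * x * g⁻¹ = x then (1:ℂ) else 0) * (starRingEnd ℂ) (V.character g) := by
          simp_rw [h1, Finset.sum_mul]
      _ = ∑ x : G, ∑ g : G,
            (if g ∈ Subgroup.centralizer {x} then ((starRingEnd ℂ) (V.character g)) else 0) := by
          rw [Finset.sum_comm]
          apply Finset.sum_congr rfl; intro x _
          apply Finset.sum_congr rfl; intro g _
          rw [ite_mul, one_mul, zero_mul]
          congr 1
          simp only [eq_iff_iff]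
          rw [Subgroup.mem_centralizer_singleton_iff, mul_inv_eq_iff_eq_mul]
      _ = ∑ x : G, ((n x : ℕ) : ℂ) := by
          apply Finset.sum_congr rfl; intro x _
          rw [← Finset.sum_filter]
          rw [Finset.sum_subtype (p := fun g => g ∈ Subgroup.centralizer {x})
            (Finset.univ.filter (· ∈ Subgroup.centralizer {x}))
            (by intro g; simp) (fun g => (starRingEnd ℂ) (V.character g))]
          rw [← map_sum, sum_char_subgroup V (Subgroup.centralizer {x})]
          rw [hn]
          push_cast
          rw [_root_.map_mul]
          simp [Complex.conj_natCast]
      _ = ((∑ x : G, n x : ℕ) : ℂ) := by push_cast; rfl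
  rw [key]
  rw [Nat.cast_ne_zero]
  obtain ⟨x₀, v, hv0, hv⟩ := hx
  have hpos : 0 < n x₀ := by
    apply Nat.mul_pos Nat.card_pos
    have hmem : v ∈ Representation.invariants
        (V.ρ.comp (Subgroup.centralizer {x₀}).subtype) := by
      intro g
      exact hv g g.2
    have : Nontrivial (Representation.invariants
        (V.ρ.comp (Subgroup.centralizer {x₀}).subtype)) := by
      refine nontrivial_of_ne ⟨v, hmem⟩ 0 ?_
      simp [Subtype.ext_iff, hv0]
    exact Module.finrank_pos
  intro h0
  have := Finset.sum_eq_zero_iff.mp h0 x₀ (Finset.mem_univ x₀)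
  omega

end General

/-! ### Explicit elements of `GL₂` -/

variable {F : Type} [Field F] [Fintype F] [DecidableEq F]

def uu (x : F) : GL (Fin 2) F :=
  ⟨!![1, x; 0, 1], !![1, -x; 0, 1],
    by ext i j; fin_cases i <;> fin_cases j <;> simp [Matrix.mul_apply, Fin.sum_univ_two],
    by ext i j; fin_cases i <;> fin_cases j <;> simp [Matrix.mul_apply, Fin.sum_univ_two]⟩

def lu : GL (Fin 2) F :=
  ⟨!![1, 0; 1, 1], !![1, 0; -1, 1],
    by ext i j; fin_cases i <;> fin_cases j <;> simp [Matrix.mul_apply, Fin.sum_univ_two],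
    by ext i j; fin_cases i <;> fin_cases j <;> simp [Matrix.mul_apply, Fin.sum_univ_two]⟩

def sw : GL (Fin 2) F :=
  ⟨!![0, 1; 1, 0], !![0, 1; 1, 0],
    by ext i j; fin_cases i <;> fin_cases j <;> simp [Matrix.mul_apply, Fin.sum_univ_two],
    by ext i j; fin_cases i <;> fin_cases j <;> simp [Matrix.mul_apply, Fin.sum_univ_two]⟩

def tt (a : Fˣ) : GL (Fin 2) F :=
  ⟨!![(a:F), 0; 0, 1], !![((a⁻¹:Fˣ):F), 0; 0, 1],
    by ext i j; fin_cases i <;> fin_cases j <;> simp [Matrix.mul_apply, Fin.sum_univ_two],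
    by ext i j; fin_cases i <;> fin_cases j <;> simp [Matrix.mul_apply, Fin.sum_univ_two]⟩

def zz (a : Fˣ) : GL (Fin 2) F :=
  ⟨(a:F) • 1, ((a⁻¹:Fˣ):F) • 1, by simp [smul_smul], by simp [smul_smul]⟩

@[simp] lemma uu_val (x : F) : (uu x).val = !![1, x; 0, 1] := rfl
@[simp] lemma lu_val : (lu : GL (Fin 2) F).val = !![1, 0; 1, 1] := rfl
@[simp] lemma sw_val : (sw : GL (Fin 2) F).val = !![0, 1; 1, 0] := rfl
@[simp] lemma tt_val (a : Fˣ) : (tt a : GL (Fin 2) F).val = !![(a:F), 0; 0, 1] := rfl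
@[simp] lemma zz_val (a : Fˣ) : (zz a : GL (Fin 2) F).val = (a:F) • 1 := rfl

lemma uu_add (x y : F) : uu x * uu y = uu (x + y) := by
  apply Units.ext
  show (uu x).val * (uu y).val = _
  ext i j; fin_cases i <;> fin_cases j <;>
    simp [Matrix.mul_apply, Fin.sum_univ_two] <;> ring

lemma uu_zero : (uu 0 : GL (Fin 2) F) = 1 := by
  apply Units.ext
  show (uu (0:F)).val = 1
  ext i j; fin_cases i <;> fin_cases j <;> simp [Matrix.one_fin_two]

lemma tt_mul (a b : Fˣ) : (tt a : GL (Fin 2) F) * tt b = tt (a * b) := by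
  apply Units.ext
  show (tt a : GL (Fin 2) F).val * (tt b).val = _
  ext i j; fin_cases i <;> fin_cases j <;> simp [Matrix.mul_apply, Fin.sum_univ_two]

lemma tt_one : (tt 1 : GL (Fin 2) F) = 1 := by
  apply Units.ext
  show (tt (1:Fˣ)).val = 1
  ext i j; fin_cases i <;> fin_cases j <;> simp [Matrix.one_fin_two]

lemma zz_one : (zz 1 : GL (Fin 2) F) = 1 := by
  apply Units.ext
  show ((1:Fˣ):F) • (1 : Matrix (Fin 2) (Fin 2) F) = 1
  simp

lemma zz_mem_center (a : Fˣ) : (zz a : GL (Fin 2) F) ∈ Subgroup.center (GL (Fin 2) F) := by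
  rw [Subgroup.mem_center_iff]
  intro g
  apply Units.ext
  show (g.val) * ((a:F) • 1) = ((a:F) • 1) * g.val
  rw [mul_smul_comm, smul_mul_assoc, mul_one, one_mul]

lemma conj_utu (x : F) (a : Fˣ) :
    uu x * tt a * uu (-x) = uu (x - x * a) * tt a := by
  apply Units.ext
  show (uu x).val * (tt a).val * (uu (-x)).val = (uu (x - x*(a:F))).val * (tt a).val
  ext i j; fin_cases i <;> fin_cases j <;>
    simp [Matrix.mul_apply, Fin.sum_univ_two] <;> ring

lemma sw_uu_sw : (sw * uu 1 * sw : GL (Fin 2) F) = lu := by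
  apply Units.ext
  show (sw : GL (Fin 2) F).val * (uu 1).val * sw.val = lu.val
  ext i j; fin_cases i <;> fin_cases j <;>
    simp [Matrix.mul_apply, Fin.sum_univ_two]

lemma sw_sw : (sw * sw : GL (Fin 2) F) = 1 := by
  apply Units.ext
  show (sw : GL (Fin 2) F).val * sw.val = 1
  ext i j; fin_cases i <;> fin_cases j <;>
    simp [Matrix.mul_apply, Fin.sum_univ_two, Matrix.one_fin_two]

/-! ### Centralizer computations -/

lemma isUnit_det_val (g : GL (Fin 2) F) : IsUnit (g.val.det) :=
  (Matrix.isUnit_iff_isUnit_det _).mp g.isUnit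

lemma centralizer_uu_one (g : GL (Fin 2) F) (hg : g ∈ Subgroup.centralizer {uu 1}) :
    ∃ (a : Fˣ) (b : F), g = zz a * uu b := by
  have hc : g * uu 1 = uu 1 * g := Subgroup.mem_centralizer_singleton_iff.mp hg
  have hm : g.val * (uu 1).val = (uu 1).val * g.val := by
    rw [← Units.val_mul, ← Units.val_mul, hc]
  set A := g.val with hA
  have e := fun i j => congrFun (congrFun hm i) j
  have e00 := e 0 0
  have e01 := e 0 1
  simp [Matrix.mul_apply, Fin.sum_univ_two] at e00 e01
  have h10 : A 1 0 = 0 := e00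
  have h11 : A 1 1 = A 0 0 := by linear_combination -e01
  have hdet := isUnit_det_val g
  rw [Matrix.det_fin_two] at hdet
  rw [← hA] at hdet
  have ha : A 0 0 ≠ 0 := by
    intro h
    rw [h, h10] at hdet
    simp at hdet
  refine ⟨Units.mk0 (A 0 0) ha, (A 0 0)⁻¹ * A 0 1, ?_⟩
  apply Units.ext
  show A = ((A 0 0) • 1 : Matrix (Fin 2) (Fin 2) F) * !![1, (A 0 0)⁻¹ * A 0 1; 0, 1]
  rw [Matrix.eta_fin_two A]
  ext i j
  fin_cases i <;> fin_cases j <;>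
    simp [Matrix.mul_apply, Fin.sum_univ_two, Matrix.one_fin_two, h10, h11] <;>
    field_simp

lemma centralizer_tt (a₀ : Fˣ) (ha₀ : a₀ ≠ 1) (g : GL (Fin 2) F)
    (hg : g ∈ Subgroup.centralizer {tt a₀}) :
    ∃ (d b : Fˣ), g = zz d * tt b := by
  have hc : g * tt a₀ = tt a₀ * g := Subgroup.mem_centralizer_singleton_iff.mp hg
  have hm : g.val * (tt a₀).val = (tt a₀).val * g.val := by
    rw [← Units.val_mul, ← Units.val_mul, hc]
  set A := g.val with hA
  have e := fun i j => congrFun (congrFun hm i) j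
  have e01 := e 0 1
  have e10 := e 1 0
  simp [Matrix.mul_apply, Fin.sum_univ_two] at e01 e10
  have hne : (a₀ : F) - 1 ≠ 0 := by
    intro h
    apply ha₀
    apply Units.ext
    push_cast
    linear_combination h
  have h01 : A 0 1 = 0 := by
    have : A 0 1 * ((a₀:F) - 1) = 0 := by linear_combination -e01
    rcases mul_eq_zero.mp this with h | h
    · exact h
    · exact absurd h hne
  have h10 : A 1 0 = 0 := by
    have : A 1 0 * ((a₀:F) - 1) = 0 := by linear_combination e10
    rcases mul_eq_zero.mp this with h | h
    · exact h
    · exact absurd h hne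
  have hdet := isUnit_det_val g
  rw [Matrix.det_fin_two] at hdet
  rw [← hA] at hdet
  rw [h01, h10] at hdet
  simp only [mul_zero, zero_mul, sub_zero] at hdet
  have ha : A 0 0 ≠ 0 := fun h => by simp [h] at hdet
  have hd : A 1 1 ≠ 0 := fun h => by simp [h] at hdet
  refine ⟨Units.mk0 (A 1 1) hd, Units.mk0 (A 0 0) ha * (Units.mk0 (A 1 1) hd)⁻¹, ?_⟩
  apply Units.ext
  show A = ((A 1 1) • 1 : Matrix (Fin 2) (Fin 2) F) *
      !![((Units.mk0 (A 0 0) ha * (Units.mk0 (A 1 1) hd)⁻¹ : Fˣ) : F), 0; 0, 1]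
  ext i j
  fin_cases i <;> fin_cases j <;>
    simp [Matrix.mul_apply, Fin.sum_univ_two, Matrix.one_fin_two, h01, h10,
      Units.val_mul, Units.val_inv_eq_inv_val] <;>
    field_simp

/-! ### The case of two elements -/

def cc : GL (Fin 2) F := uu 1 * lu

lemma cc_val (two0 : (1 + 1 : F) = 0) : (cc : GL (Fin 2) F).val = !![0, 1; 1, 1] := by
  show (uu (1:F)).val * lu.val = _
  ext i j; fin_cases i <;> fin_cases j <;>
    simp [Matrix.mul_apply, Fin.sum_univ_two, two0]

lemma cc2_val (two0 : (1 + 1 : F) = 0) :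
    ((cc * cc : GL (Fin 2) F)).val = !![1, 1; 1, 0] := by
  rw [Units.val_mul, cc_val two0]
  ext i j; fin_cases i <;> fin_cases j <;>
    simp [Matrix.mul_apply, Fin.sum_univ_two, two0]

lemma centralizer_cc (two0 : (1 + 1 : F) = 0) (hx01 : ∀ x : F, x = 0 ∨ x = 1)
    (g : GL (Fin 2) F) (hg : g ∈ Subgroup.centralizer {(cc : GL (Fin 2) F)}) :
    g = 1 ∨ g = cc ∨ g = cc * cc := by
  have hc : g * cc = cc * g := Subgroup.mem_centralizer_singleton_iff.mp hg
  have hm : g.val * (cc:GL (Fin 2) F).val = (cc:GL (Fin 2) F).val * g.val := by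
    rw [← Units.val_mul, ← Units.val_mul, hc]
  rw [cc_val two0] at hm
  set A := g.val with hA
  have e := fun i j => congrFun (congrFun hm i) j
  have e00 := e 0 0
  have e01 := e 0 1
  simp [Matrix.mul_apply, Fin.sum_univ_two] at e00 e01
  have hdet := isUnit_det_val g
  rw [Matrix.det_fin_two, ← hA] at hdet
  rcases hx01 (A 0 0) with h00 | h00 <;> rcases hx01 (A 0 1) with h01 | h01
  · exfalso
    rw [h00, h01, ← e00, h01] at hdet
    simp at hdet
  · right; left
    apply Units.ext
    rw [cc_val two0, ← hA, Matrix.eta_fin_two A, ← e00, ← e01, h00, h01]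
    norm_num [two0]
  · left
    apply Units.ext
    show A = 1
    rw [Matrix.eta_fin_two A, ← e00, ← e01, h00, h01, Matrix.one_fin_two]
    norm_num
  · right; right
    apply Units.ext
    rw [cc2_val two0, ← hA, Matrix.eta_fin_two A, ← e00, ← e01, h00, h01, two0]

/-! ### The operator-averaging core -/

lemma no_both (V : FDRep ℂ (GL (Fin 2) F)) (hnt : Nontrivial V)
    (hU : ∀ v : V, (∀ x : F, V.ρ (uu x) v = v) → v = 0)
    (hT : ∀ v : V, (∀ a : Fˣ, V.ρ (tt a) v = v) → v = 0) : False := by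
  have hP : ∀ v : V, ∑ x : F, V.ρ (uu x) v = 0 := by
    intro v
    apply hU
    intro y
    rw [map_sum]
    refine Fintype.sum_equiv (Equiv.addLeft y) _ _ ?_
    intro x
    rw [← Module.End.mul_apply, ← _root_.map_mul, uu_add]
    rfl
  have hQ : ∀ v : V, ∑ a : Fˣ, V.ρ (tt a) v = 0 := by
    intro v
    apply hT
    intro b
    rw [map_sum]
    refine Fintype.sum_equiv (Equiv.mulLeft b) _ _ ?_
    intro a
    rw [← Module.End.mul_apply, ← _root_.map_mul, tt_mul]
    rfl
  obtain ⟨v, hv⟩ := exists_ne (0 : V)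
  have h1 : ∑ x : F, ∑ a : Fˣ, V.ρ (uu x * tt a * uu (-x)) v = 0 := by
    apply Finset.sum_eq_zero
    intro x _
    have : ∀ a : Fˣ, V.ρ (uu x * tt a * uu (-x)) v
        = V.ρ (uu x) (V.ρ (tt a) (V.ρ (uu (-x)) v)) := by
      intro a
      rw [_root_.map_mul, _root_.map_mul]
      rfl
    rw [Finset.sum_congr rfl fun a _ => this a, ← map_sum, hQ, map_zero]
  have h2 : ∑ x : F, ∑ a : Fˣ, V.ρ (uu x * tt a * uu (-x)) v
      = (Fintype.card F : ℂ) • v := by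
    have inner : ∀ x : F, ∑ a : Fˣ, V.ρ (uu x * tt a * uu (-x)) v
        = v + ∑ a ∈ Finset.univ.erase (1:Fˣ), V.ρ (uu (x - x * a) * tt a) v := by
      intro x
      rw [← Finset.add_sum_erase _ _ (Finset.mem_univ (1:Fˣ))]
      congr 1
      · rw [tt_one, mul_one, uu_add]
        norm_num [uu_zero]
      · exact Finset.sum_congr rfl fun a _ => by rw [conj_utu]
    rw [Finset.sum_congr rfl fun x _ => inner x, Finset.sum_add_distrib]
    rw [Finset.sum_const, Finset.card_univ]
    rw [Finset.sum_comm]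
    have outer : ∀ a ∈ Finset.univ.erase (1:Fˣ),
        ∑ x : F, V.ρ (uu (x - x * a) * tt a) v = 0 := by
      intro a ha
      have hne : (1:F) - (a:F) ≠ 0 := by
        intro h
        apply Finset.ne_of_mem_erase ha
        apply Units.ext
        push_cast
        linear_combination -h
      have hre : ∑ x : F, V.ρ (uu (x - x * a) * tt a) v
          = ∑ x : F, V.ρ (uu x * tt a) v := by
        refine Fintype.sum_equiv (Equiv.mulRight₀ ((1:F) - a) hne) _ _ ?_
        intro x
        show _ = V.ρ (uu (x * ((1:F) - (a:F))) * tt a) v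
        have harg : x * ((1:F) - (a:F)) = x - x * a := by ring
        rw [harg]
      rw [hre]
      have hsplit : ∀ x : F, V.ρ (uu x * tt a) v = V.ρ (uu x) (V.ρ (tt a) v) := by
        intro x; rw [_root_.map_mul]; rfl
      rw [Finset.sum_congr rfl fun x _ => hsplit x, hP]
    rw [Finset.sum_congr rfl outer]
    simp [← Nat.cast_smul_eq_nsmul ℂ]
  rw [h1] at h2
  have hcard : (Fintype.card F : ℂ) ≠ 0 := Nat.cast_ne_zero.mpr Fintype.card_ne_zero
  exact hv (by simpa [hcard] using h2.symm)

/-! ### Existence of a centralizer with a nonzero invariant vector -/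

lemma main_exists (V : FDRep ℂ (GL (Fin 2) F)) (hr : 0 < finrank ℂ V)
    (hZ : ∀ z ∈ Subgroup.center (GL (Fin 2) F), ∀ v : V, V.ρ z v = v) :
    ∃ x : GL (Fin 2) F, ∃ v : V, v ≠ 0 ∧ ∀ g ∈ Subgroup.centralizer {x}, V.ρ g v = v := by
  have hnt : Nontrivial V := by
    exact nontrivial_of_finrank_pos hr
  by_cases hq : ∃ a₀ : Fˣ, a₀ ≠ 1
  · obtain ⟨a₀, ha₀⟩ := hq
    by_cases hUc : ∃ v : V, v ≠ 0 ∧ ∀ x : F, V.ρ (uu x) v = v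
    · obtain ⟨v, hv0, hvf⟩ := hUc
      refine ⟨uu 1, v, hv0, ?_⟩
      intro g hg
      obtain ⟨a, b, hgab⟩ := centralizer_uu_one g hg
      rw [hgab, _root_.map_mul, Module.End.mul_apply, hvf b, hZ _ (zz_mem_center a) v]
    · by_cases hTc : ∃ v : V, v ≠ 0 ∧ ∀ a : Fˣ, V.ρ (tt a) v = v
      · obtain ⟨v, hv0, hvf⟩ := hTc
        refine ⟨tt a₀, v, hv0, ?_⟩
        intro g hg
        obtain ⟨d, b, hgdb⟩ := centralizer_tt a₀ ha₀ g hg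
        rw [hgdb, _root_.map_mul, Module.End.mul_apply, hvf b, hZ _ (zz_mem_center d) v]
      · exfalso
        push_neg at hUc hTc
        apply no_both V hnt
        · intro v hvf
          by_contra h0
          obtain ⟨x, hx⟩ := hUc v h0
          exact hx (hvf x)
        · intro v hvf
          by_contra h0
          obtain ⟨a, ha⟩ := hTc v h0
          exact ha (hvf a)
  · -- the two-element field case
    push_neg at hq
    have hx01 : ∀ x : F, x = 0 ∨ x = 1 := by
      intro x
      by_cases h : x = 0
      · exact Or.inl h
      · right
        have h1 := hq (Units.mk0 x h)
        have h2 := congrArg Units.val h1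
        simpa using h2
    have two0 : (1 + 1 : F) = 0 := by
      rcases hx01 (1 + 1) with h | h
      · exact h
      · exfalso
        have h1 : (1:F) = 0 := by linear_combination h
        exact one_ne_zero h1
    by_cases hcv : ∃ v : V, v ≠ 0 ∧
        ∀ g ∈ Subgroup.centralizer {(cc : GL (Fin 2) F)}, V.ρ g v = v
    · obtain ⟨v, h0, hv⟩ := hcv
      exact ⟨cc, v, h0, hv⟩
    · by_cases huv : ∃ v : V, v ≠ 0 ∧
          ∀ g ∈ Subgroup.centralizer {(uu 1 : GL (Fin 2) F)}, V.ρ g v = v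
      · obtain ⟨v, h0, hv⟩ := huv
        exact ⟨uu 1, v, h0, hv⟩
      · exfalso
        push_neg at hcv huv
        have hcv' : ∀ v : V,
            (∀ g ∈ Subgroup.centralizer {(cc : GL (Fin 2) F)}, V.ρ g v = v) → v = 0 := by
          intro v hvp
          by_contra h0
          obtain ⟨g, hgC, hgne⟩ := hcv v h0
          exact hgne (hvp g hgC)
        have huv' : ∀ v : V,
            (∀ g ∈ Subgroup.centralizer {(uu 1 : GL (Fin 2) F)}, V.ρ g v = v) → v = 0 := by
          intro v hvp
          by_contra h0
          obtain ⟨g, hgC, hgne⟩ := huv v h0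
          exact hgne (hvp g hgC)
        have huu1 : (uu 1 : GL (Fin 2) F) * uu 1 = 1 := by
          rw [uu_add, two0, uu_zero]
        have hmu : ∀ v : V, V.ρ (uu 1) v = -v := by
          intro v
          have hfix : ∀ g ∈ Subgroup.centralizer {(uu 1 : GL (Fin 2) F)},
              V.ρ g (v + V.ρ (uu 1) v) = v + V.ρ (uu 1) v := by
            intro g hg
            have hu2 : V.ρ (uu 1) (v + V.ρ (uu 1) v) = v + V.ρ (uu 1) v := by
              rw [map_add, ← Module.End.mul_apply (V.ρ (uu 1)) (V.ρ (uu 1)),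
                ← _root_.map_mul, huu1, _root_.map_one, Module.End.one_apply]
              abel
            obtain ⟨a, b, hgab⟩ := centralizer_uu_one g hg
            rw [hq a, zz_one, one_mul] at hgab
            rcases hx01 b with hb | hb
            · rw [hgab, hb, uu_zero, _root_.map_one, Module.End.one_apply]
            · rw [hgab, hb]
              exact hu2
          have hzero := huv' _ hfix
          have := eq_neg_of_add_eq_zero_right hzero
          rw [← this]
        have hlv : ∀ v : V, V.ρ lu v = -v := by
          intro v
          have : (lu : GL (Fin 2) F) = sw * uu 1 * sw := sw_uu_sw.symm
          rw [this, _root_.map_mul, _root_.map_mul, Module.End.mul_apply, Module.End.mul_apply,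
            hmu (V.ρ sw v), map_neg]
          rw [← Module.End.mul_apply (V.ρ sw) (V.ρ sw), ← _root_.map_mul, sw_sw,
            _root_.map_one, Module.End.one_apply]
        have hccv : ∀ v : V, V.ρ (cc : GL (Fin 2) F) v = v := by
          intro v
          show V.ρ (uu 1 * lu) v = v
          rw [_root_.map_mul, Module.End.mul_apply, hlv v, map_neg, hmu v, neg_neg]
        obtain ⟨v, hv⟩ := exists_ne (0 : V)
        apply hv
        apply hcv' v
        intro g hg
        rcases centralizer_cc two0 hx01 g hg with h | h | h
        · rw [h, _root_.map_one, Module.End.one_apply]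
        · rw [h]
          exact hccv v
        · rw [h, _root_.map_mul, Module.End.mul_apply, hccv, hccv]

end Stmt6Aux

/-- Every irreducible complex character of `GL₂(𝔽_q)` that is trivial on the centre is a
constituent of the conjugation character. -/
theorem stmt6 (F : Type) [Field F] [Fintype F] [DecidableEq F]
    (χ : GL (Fin 2) F → ℂ) (hχ : IsIrrChar (GL (Fin 2) F) χ)
    (htriv : ∀ z ∈ Subgroup.center (GL (Fin 2) F), χ z = χ 1) :
    (∑ g : GL (Fin 2) F, conjChar (GL (Fin 2) F) g * (starRingEnd ℂ) (χ g)) ≠ 0 := by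
  obtain ⟨V, hsimp, hchi⟩ := hχ
  subst hchi
  have hr := Stmt6Aux.finrank_pos_of_simple V hsimp
  have hZ := Stmt6Aux.central_trivial V (by intro z hz; simpa using htriv z hz)
  exact Stmt6Aux.final V (Stmt6Aux.main_exists V hr hZ)
end

section
/- Let r ≥ 2 and G be GL₂(ℤ/p^r) or SL₂(ℤ/p^r) with p odd. Then [G,G] ∩ K^{r−1} contains K^{r−1}_{SL} := SL₂(ℤ/p^r) ∩ K^{r−1}, where K^{r−1} is the kernel of reduction modulo p^{r−1}. Equivalently, every matrix of the form 1 + p^{r−1}X with X of trace zero modulo p lies in the commutator subgroup of G. -/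
open Matrix
open scoped commutatorElement

variable {R : Type*} [CommRing R]

private def Eu (t : R) : SpecialLinearGroup (Fin 2) R := ⟨!![1, t; 0, 1], by simp [det_fin_two_of]⟩
private def El (t : R) : SpecialLinearGroup (Fin 2) R := ⟨!![1, 0; t, 1], by simp [det_fin_two_of]⟩

private lemma commD (t u : R) (hu : u * u = 0) :
    (⁅Eu t, El u⁆ : SpecialLinearGroup (Fin 2) R).val
      = !![1 + t*u, -(t*t*u); 0, 1 - t*u] := by
  have hu2 : u^2 = 0 := by rw [pow_two, hu]
  have hu3 : u^3 = 0 := by rw [pow_succ, hu2, zero_mul]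
  have h1 : ((Eu t)⁻¹ : SpecialLinearGroup (Fin 2) R).val = !![1, -t; 0, 1] := by
    change adjugate (Eu t).val = _; rw [Eu, adjugate_fin_two]
    norm_num
  have h2 : ((El u)⁻¹ : SpecialLinearGroup (Fin 2) R).val = !![1, 0; -u, 1] := by
    change adjugate (El u).val = _; rw [El, adjugate_fin_two]
    norm_num
  show (Eu t).val * (El u).val * ((Eu t)⁻¹).val * ((El u)⁻¹).val = _
  rw [h1, h2]
  show (!![1, t; 0, 1] * !![1, 0; u, 1]) * _ * _ = _
  rw [mul_fin_two, mul_fin_two, mul_fin_two]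
  ext i j
  fin_cases i <;> fin_cases j <;> simp <;> ring_nf <;> simp [hu2, hu3]

private lemma commC (t u : R) (hu : u * u = 0) :
    (⁅El t, Eu u⁆ : SpecialLinearGroup (Fin 2) R).val
      = !![1 - t*u, 0; -(t*t*u), 1 + t*u] := by
  have hu2 : u^2 = 0 := by rw [pow_two, hu]
  have hu3 : u^3 = 0 := by rw [pow_succ, hu2, zero_mul]
  have h1 : ((El t)⁻¹ : SpecialLinearGroup (Fin 2) R).val = !![1, 0; -t, 1] := by
    change adjugate (El t).val = _; rw [El, adjugate_fin_two]; norm_num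
  have h2 : ((Eu u)⁻¹ : SpecialLinearGroup (Fin 2) R).val = !![1, -u; 0, 1] := by
    change adjugate (Eu u).val = _; rw [Eu, adjugate_fin_two]; norm_num
  show (El t).val * (Eu u).val * ((El t)⁻¹).val * ((Eu u)⁻¹).val = _
  rw [h1, h2]
  show (!![1, 0; t, 1] * !![1, u; 0, 1]) * _ * _ = _
  rw [mul_fin_two, mul_fin_two, mul_fin_two]
  ext i j
  fin_cases i <;> fin_cases j <;> simp <;> ring_nf <;> simp [hu2, hu3]

private lemma sl_part (p : ℕ) (hp : p.Prime) (hodd : p ≠ 2) (r : ℕ) (hr : 2 ≤ r) :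
    (Matrix.SpecialLinearGroup.map (n := Fin 2)
        (ZMod.castHom (pow_dvd_pow p (Nat.sub_le r 1)) (ZMod (p ^ (r - 1))))).ker
      ≤ commutator (Matrix.SpecialLinearGroup (Fin 2) (ZMod (p ^ r))) := by
  intro s hs
  haveI : NeZero (p ^ r) := ⟨pow_ne_zero _ hp.ne_zero⟩
  haveI : NeZero (p ^ (r - 1)) := ⟨pow_ne_zero _ hp.ne_zero⟩
  obtain ⟨q, hqdef⟩ : ∃ q : ZMod (p ^ r), q = (p : ZMod (p ^ r)) ^ (r - 1) := ⟨_, rfl⟩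
  -- q * q = 0
  have hq0 : q * q = 0 := by
    have h1 : ((p ^ (r-1) * p ^ (r-1) : ℕ) : ZMod (p ^ r)) = 0 := by
      rw [ZMod.natCast_eq_zero_iff, ← pow_add]
      exact pow_dvd_pow p (by omega)
    push_cast at h1
    rw [hqdef]; exact h1
  -- extraction of q-divisibility
  have key : ∀ x : ZMod (p ^ r), (ZMod.castHom (pow_dvd_pow p (Nat.sub_le r 1))
      (ZMod (p ^ (r - 1)))) x = 0 → ∃ y, x = q * y := by
    intro x hx
    rw [ZMod.castHom_apply] at hx
    have h1 : ((x.val : ℕ) : ZMod (p ^ (r-1))) = 0 := by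
      rw [ZMod.natCast_val, hx]
    rw [ZMod.natCast_eq_zero_iff] at h1
    obtain ⟨m, hm⟩ := h1
    refine ⟨(m : ZMod (p ^ r)), ?_⟩
    have h2 : x = ((x.val : ℕ) : ZMod (p ^ r)) := by rw [ZMod.natCast_val, ZMod.cast_id]
    rw [h2, hm, hqdef]; push_cast; ring
  -- entries of s
  rw [MonoidHom.mem_ker] at hs
  set f := (ZMod.castHom (pow_dvd_pow p (Nat.sub_le r 1)) (ZMod (p ^ (r - 1)))) with hf
  have h0 : (f.mapMatrix s.val) = (1 : Matrix (Fin 2) (Fin 2) (ZMod (p ^ (r-1)))) := by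
    have h1 := congrArg Subtype.val hs
    rw [SpecialLinearGroup.map_apply_coe] at h1
    exact h1
  have hval : ∀ i j, f (s.val i j) = (1 : Matrix (Fin 2) (Fin 2) (ZMod (p ^ (r-1)))) i j := by
    intro i j
    rw [← h0, RingHom.mapMatrix_apply, Matrix.map_apply]
  obtain ⟨a, ha⟩ : ∃ y, s.val 0 0 - 1 = q * y := by
    apply key; rw [map_sub, _root_.map_one, hval 0 0]; simp [Matrix.one_apply]
  obtain ⟨b, hb⟩ : ∃ y, s.val 0 1 = q * y := by
    apply key; rw [hval 0 1]; simp [Matrix.one_apply]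
  obtain ⟨c, hc⟩ : ∃ y, s.val 1 0 = q * y := by
    apply key; rw [hval 1 0]; simp [Matrix.one_apply]
  obtain ⟨d, hd'⟩ : ∃ y, s.val 1 1 - 1 = q * y := by
    apply key; rw [map_sub, _root_.map_one, hval 1 1]; simp [Matrix.one_apply]
  have ha' : s.val 0 0 = 1 + q * a := by linear_combination ha
  have hb' : s.val 0 1 = q * b := hb
  have hc' : s.val 1 0 = q * c := hc
  have hd'' : s.val 1 1 = 1 + q * d := by linear_combination hd'
  -- determinant condition
  have hdet : s.val 0 0 * s.val 1 1 - s.val 0 1 * s.val 1 0 = 1 := by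
    rw [← det_fin_two]; exact s.2
  have hqd : q * d = -(q * a) := by
    rw [ha', hb', hc', hd''] at hdet
    linear_combination hdet + (b*c - a*d) * hq0
  -- inverse of 2
  obtain ⟨k, hk⟩ : Odd (p ^ r) := Odd.pow (hp.odd_of_ne_two hodd)
  have hk0 : ((2 * k + 1 : ℕ) : ZMod (p ^ r)) = 0 := by rw [← hk]; exact ZMod.natCast_self _
  push_cast at hk0
  -- hk0 : 2 * k + 1 = 0 in ZMod (p ^ r)
  obtain ⟨u2, hu2def⟩ : ∃ u2 : ZMod (p ^ r), u2 = -(k : ZMod (p ^ r)) := ⟨_, rfl⟩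
  have h2u : (2 : ZMod (p ^ r)) * u2 = 1 := by rw [hu2def]; linear_combination -hk0
  obtain ⟨y₁, hy1⟩ : ∃ y₁ : ZMod (p ^ r), y₁ = -(u2 * c) := ⟨_, rfl⟩
  obtain ⟨y₂, hy2⟩ : ∃ y₂ : ZMod (p ^ r), y₂ = -(u2 * (b + a)) := ⟨_, rfl⟩
  have hsq : ∀ y : ZMod (p ^ r), (q * y) * (q * y) = 0 := fun y => by linear_combination (y * y) * hq0
  -- the product of commutators
  obtain ⟨P, hP⟩ : ∃ P : SpecialLinearGroup (Fin 2) (ZMod (p ^ r)), P =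
    ⁅Eu (1 : ZMod (p ^ r)), El (q*a)⁆ * ⁅Eu (1 : ZMod (p ^ r)), El (q*y₂)⁆ * ⁅Eu (-1 : ZMod (p ^ r)), El (q*y₂)⁆ *
      ⁅El (1 : ZMod (p ^ r)), Eu (q*y₁)⁆ * ⁅El (-1 : ZMod (p ^ r)), Eu (q*y₁)⁆ := ⟨_, rfl⟩
  have hq2 : q^2 = 0 := by rw [pow_two, hq0]
  have hq3 : q^3 = 0 := by rw [pow_succ, hq2, zero_mul]
  have hq4 : q^4 = 0 := by rw [pow_succ, hq3, zero_mul]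
  have hq5 : q^5 = 0 := by rw [pow_succ, hq4, zero_mul]
  have hvalP : (P : Matrix (Fin 2) (Fin 2) (ZMod (p ^ r))) = s.val := by
    rw [hP]
    change (⁅Eu (1 : ZMod (p ^ r)), El (q*a)⁆ : SpecialLinearGroup (Fin 2) (ZMod (p ^ r))).val *
      (⁅Eu (1 : ZMod (p ^ r)), El (q*y₂)⁆ : SpecialLinearGroup (Fin 2) (ZMod (p ^ r))).val *
      (⁅Eu (-1 : ZMod (p ^ r)), El (q*y₂)⁆ : SpecialLinearGroup (Fin 2) (ZMod (p ^ r))).val *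
      (⁅El (1 : ZMod (p ^ r)), Eu (q*y₁)⁆ : SpecialLinearGroup (Fin 2) (ZMod (p ^ r))).val *
      (⁅El (-1 : ZMod (p ^ r)), Eu (q*y₁)⁆ : SpecialLinearGroup (Fin 2) (ZMod (p ^ r))).val = _
    rw [commD (1 : ZMod (p ^ r)) (q*a) (hsq a), commD (1 : ZMod (p ^ r)) (q*y₂) (hsq y₂),
      commD (-1 : ZMod (p ^ r)) (q*y₂) (hsq y₂),
      commC (1 : ZMod (p ^ r)) (q*y₁) (hsq y₁), commC (-1 : ZMod (p ^ r)) (q*y₁) (hsq y₁),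
      mul_fin_two, mul_fin_two, mul_fin_two, mul_fin_two]
    rw [Matrix.eta_fin_two s.val, ha', hb', hc', hd'']
    ext i j
    fin_cases i <;> fin_cases j <;> simp <;> ring_nf <;>
      simp only [hq2, hq3, hq4, hq5, zero_mul, mul_zero, add_zero, zero_add, neg_zero]
    · ring
    · linear_combination (q*(b+a)) * h2u - 2*q*hy2
    · linear_combination (q*c) * h2u - 2*q*hy1
    · linear_combination -hqd
  have hsP : s = P := Subtype.coe_injective hvalP.symm
  rw [commutator_def, hsP, hP]
  have mem : ∀ x y : SpecialLinearGroup (Fin 2) (ZMod (p ^ r)),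
      ⁅x, y⁆ ∈ ⁅(⊤ : Subgroup _), (⊤ : Subgroup _)⁆ := fun x y =>
    Subgroup.commutator_mem_commutator (Subgroup.mem_top _) (Subgroup.mem_top _)
  exact mul_mem (mul_mem (mul_mem (mul_mem (mem _ _) (mem _ _)) (mem _ _)) (mem _ _)) (mem _ _)



/-- For `p` odd and `r ≥ 2`, the commutator subgroup of `G = GL₂(ℤ/p^r)` (resp.
`SL₂(ℤ/p^r)`) contains `SL₂(ℤ/p^r) ∩ K^{r−1}` (resp. `K^{r−1}_{SL}`), where `K^{r−1}` is
the kernel of reduction modulo `p^{r−1}`. -/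
theorem stmt9 (p : ℕ) (hp : p.Prime) (hodd : p ≠ 2) (r : ℕ) (hr : 2 ≤ r) :
    (∀ g : GL (Fin 2) (ZMod (p ^ r)),
      g ∈ (Matrix.GeneralLinearGroup.map (n := Fin 2)
            (ZMod.castHom (pow_dvd_pow p (Nat.sub_le r 1)) (ZMod (p ^ (r - 1))))).ker →
      (∃ s : Matrix.SpecialLinearGroup (Fin 2) (ZMod (p ^ r)),
          Matrix.SpecialLinearGroup.toGL s = g) →
      g ∈ commutator (GL (Fin 2) (ZMod (p ^ r)))) ∧
    ((Matrix.SpecialLinearGroup.map (n := Fin 2)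
        (ZMod.castHom (pow_dvd_pow p (Nat.sub_le r 1)) (ZMod (p ^ (r - 1))))).ker
      ≤ commutator (Matrix.SpecialLinearGroup (Fin 2) (ZMod (p ^ r)))) := by
  refine ⟨?_, sl_part p hp hodd r hr⟩
  rintro g hker ⟨s, rfl⟩
  have hs : s ∈ (Matrix.SpecialLinearGroup.map (n := Fin 2)
      (ZMod.castHom (pow_dvd_pow p (Nat.sub_le r 1)) (ZMod (p ^ (r - 1))))).ker := by
    rw [MonoidHom.mem_ker]
    have h1 : ((Matrix.SpecialLinearGroup.map (n := Fin 2)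
        (ZMod.castHom (pow_dvd_pow p (Nat.sub_le r 1)) (ZMod (p ^ (r - 1))))) s).val
        = ((1 : SpecialLinearGroup (Fin 2) (ZMod (p ^ (r-1))))).val := by
      rw [SpecialLinearGroup.map_apply_coe]; change _ = (1 : Matrix (Fin 2) (Fin 2) (ZMod (p ^ (r-1))))
      exact congrArg Units.val (MonoidHom.mem_ker.mp hker)
    exact Subtype.coe_injective h1
  have h2 := sl_part p hp hodd r hr hs
  rw [commutator_def] at h2 ⊢
  have h3 : SpecialLinearGroup.toGL s ∈
      Subgroup.map (SpecialLinearGroup.toGL) ⁅(⊤ : Subgroup _), (⊤ : Subgroup _)⁆ :=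
    Subgroup.mem_map_of_mem _ h2
  rw [Subgroup.map_commutator] at h3
  exact Subgroup.commutator_mono le_top le_top h3
end

section
/- With notation as above, let β̂ = [[0, λ̂],[λ̂^{-1}Δ̂, 0]] with λ̂ ∈ 𝒪_r^× and Δ̂ ∈ 𝔭^v, and define g_{β̂} = [[1, λ̂],[−λ̂^{-1}Δ̂, 1−Δ̂]] ∈ SL₂(𝒪_r). Then the linear character ψ_{β̂}(x) = ψ(Tr(β̂(x−1))) of U^{l'−v}K^l restricts to the trivial character on U^{l'−v}K^l ∩ C_G(g_{β̂}), where G = GL₂(𝒪_r) or SL₂(𝒪_r). -/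
/-- With `β̂ = [[0,λ̂],[λ̂⁻¹Δ̂,0]]`, `λ̂` a unit, `Δ̂ ∈ 𝔭^v`, and
`g_{β̂} = [[1,λ̂],[−λ̂⁻¹Δ̂,1−Δ̂]]`, the linear character `ψ_{β̂}(x) = ψ(Tr(β̂(x−1)))` of
`U^{l'−v}K^l` is trivial on `U^{l'−v}K^l ∩ C_G(g_{β̂})`. -/
theorem stmt13 (R : Type) [CommRing R] [IsLocalRing R] [IsPrincipalIdealRing R] [Fintype R]
    (r : ℕ) (hr : 2 ≤ r) (hnil : (IsLocalRing.maximalIdeal R) ^ r = ⊥)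
    (ψ : R → ℂ) (hψ0 : ψ 0 = 1) (hψ : ∀ a b : R, ψ (a + b) = ψ a * ψ b)
    (hψprim : ∃ a ∈ (IsLocalRing.maximalIdeal R) ^ (r - 1), ψ a ≠ 1)
    (lam : Rˣ) (Δ : R) (v : ℕ) (hv : v ≤ r - r / 2)
    (hΔ : Δ ∈ (IsLocalRing.maximalIdeal R) ^ v) :
    let 𝔭 := IsLocalRing.maximalIdeal R
    let l := r / 2
    let l' := r - r / 2
    let β : Matrix (Fin 2) (Fin 2) R := !![0, (lam : R); (↑lam⁻¹ : R) * Δ, 0]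
    let gβ : Matrix (Fin 2) (Fin 2) R := !![1, (lam : R); -((↑lam⁻¹ : R) * Δ), 1 - Δ]
    let P : Matrix (Fin 2) (Fin 2) R → Prop := fun g =>
      g 0 0 - 1 ∈ 𝔭 ^ l ∧ g 1 1 - 1 ∈ 𝔭 ^ l ∧ g 1 0 ∈ 𝔭 ^ l ∧ g 0 1 ∈ 𝔭 ^ (l' - v)
    ∀ h : Matrix (Fin 2) (Fin 2) R, P h → h * gβ = gβ * h →
      ψ ((β * (h - 1)).trace) = 1 := by
  intro 𝔭 l l' β gβ P h hP hcomm
  have key := congrFun (congrFun hcomm 0) 0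
  simp [Matrix.mul_apply, Fin.sum_univ_two, β, gβ] at key
  have : (β * (h - 1)).trace = 0 := by
    simp [Matrix.trace_fin_two, Matrix.mul_apply, Matrix.vecMul, dotProduct, Fin.sum_univ_two, Matrix.sub_apply, Matrix.one_apply, β]
    linear_combination -key
  rw [this, hψ0]
end

section
/- Let 𝒪_{l'} be a finite local PIR with residue field 𝔽₂ and maximal ideal 𝔭 = (2) (ramification index 1). For every regular matrix α ∈ M₂(𝒪_{l'}), there exist x ∈ 𝒪_{l'} and a unit λ ∈ 𝒪_{l'}^× such that α + xI is SL₂(𝒪_{l'})-conjugate to a matrix β of one of the following forms: (1) β = [[0, λ],[λ^{-1}Δ, 0]]; (2) β = [[τ, λ],[λ^{-1}Δ, 0]] with τ + λ^{-1}Δ = 2λ; (3) β = [[τ, λ],[0, 0]]. -/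
open Polynomial in
lemma hensel_quad {R : Type} [CommRing R] (b c : R) (hb : IsUnit b) (hc : IsNilpotent c) :
    ∃ x : R, x ^ 2 + b * x + c = 0 := by
  obtain ⟨r, ⟨-, hr⟩, -⟩ := Polynomial.existsUnique_nilpotent_sub_and_aeval_eq_zero
      (R := R) (S := R) (x := (0:R)) (P := X^2 + C b * X + C c) (by simpa using hc)
      (by simp [derivative_X_pow]; simpa using hb)
  exact ⟨r, by simpa using hr⟩

/-- Over a finite local PIR with residue field `𝔽₂` and `(2) = 𝔭`, every regular matrix
`α ∈ M₂(𝒪_{l'})` has a translate `α + xI` that is `SL₂`-conjugate to a matrix `β` of one of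
three special forms. -/
theorem stmt17 (R : Type) [CommRing R] [IsLocalRing R] [IsPrincipalIdealRing R] [Fintype R]
    (hres : Nat.card (IsLocalRing.ResidueField R) = 2)
    (hram : Ideal.span {(2 : R)} = IsLocalRing.maximalIdeal R)
    (α : Matrix (Fin 2) (Fin 2) R)
    (hreg : ∃ g : GL (Fin 2) R,
      (g : Matrix (Fin 2) (Fin 2) R) * α * ((g⁻¹ : GL (Fin 2) R) : Matrix (Fin 2) (Fin 2) R)
        = !![0, -α.det; 1, α.trace]) :
    ∃ x : R, ∃ lam : Rˣ, ∃ g : Matrix (Fin 2) (Fin 2) R, g.det = 1 ∧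
      ((∃ Δ : R, g * (α + x • 1) = !![0, (lam : R); (↑lam⁻¹ : R) * Δ, 0] * g) ∨
       (∃ τ Δ : R, τ + (↑lam⁻¹ : R) * Δ = 2 * (lam : R) ∧
          g * (α + x • 1) = !![τ, (lam : R); (↑lam⁻¹ : R) * Δ, 0] * g) ∨
       (∃ τ : R, g * (α + x • 1) = !![τ, (lam : R); 0, 0] * g)) := by
  obtain ⟨g, hg⟩ := hreg
  obtain ⟨t, htdef⟩ : ∃ a, a = α.trace := ⟨_, rfl⟩
  obtain ⟨d, hddef⟩ : ∃ a, a = α.det := ⟨_, rfl⟩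
  rw [← htdef, ← hddef] at hg
  -- basic unit facts about g
  set M := (g : Matrix (Fin 2) (Fin 2) R) with hM
  set N := ((g⁻¹ : GL (Fin 2) R) : Matrix (Fin 2) (Fin 2) R) with hN
  have h1 : N * M = 1 := g.inv_mul
  have h2 : M * N = 1 := g.mul_inv
  clear_value M N
  obtain ⟨u, hudef⟩ : ∃ a, a = M.det := ⟨_, rfl⟩
  obtain ⟨w, hwdef⟩ : ∃ a, a = N.det := ⟨_, rfl⟩
  have huw : u * w = 1 := by
    rw [hudef, hwdef, ← Matrix.det_mul, h2, Matrix.det_one]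
  have hwu : w * u = 1 := by rw [mul_comm]; exact huw
  -- nilpotency of 2
  have h2nil : IsNilpotent (2 : R) := by
    have : IsArtinianRing R := isArtinian_of_finite
    obtain ⟨n, hn⟩ := IsArtinianRing.isNilpotent_jacobson_bot (R := R)
    refine ⟨n, ?_⟩
    have h2m : (2:R) ∈ IsLocalRing.maximalIdeal R := by
      rw [← hram]; exact Ideal.mem_span_singleton_self _
    have := Ideal.pow_mem_pow h2m n
    rw [IsLocalRing.jacobson_eq_maximalIdeal ⊥ bot_ne_top] at hn
    simpa [hn] using this
  -- residue field fact
  have hsub1 : ∀ z : R, IsUnit z → z - 1 ∈ IsLocalRing.maximalIdeal R := by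
    intro z hz
    obtain ⟨a, -, ha⟩ := (Nat.card_eq_two_iff' (0 : IsLocalRing.ResidueField R)).mp hres
    have hz1 : IsLocalRing.residue R z = 1 := by
      have hz' : IsLocalRing.residue R z ≠ 0 := (hz.map _).ne_zero
      rw [ha _ hz', ha 1 one_ne_zero]
    have : IsLocalRing.residue R (z - 1) = 0 := by rw [map_sub, hz1, map_one, sub_self]
    exact (Ideal.Quotient.eq_zero_iff_mem).mp this
  have hmemnil : ∀ z : R, z ∈ IsLocalRing.maximalIdeal R → IsNilpotent z := by
    intro z hz
    rw [← hram, Ideal.mem_span_singleton'] at hz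
    obtain ⟨y, hy⟩ := hz
    rw [← hy]
    exact (Commute.all y (2:R)).isNilpotent_mul_left h2nil
  -- g conjugates α to its companion matrix
  have hg' : M * α = !![0, -d; 1, t] * M := by
    have := congrArg (fun m => m * M) hg
    simpa [Matrix.mul_assoc, h1] using this
  -- the key conjugation identity, for every x
  have key : ∀ x : R, (!![0, -w; 1, -x] * M) * (α + x • 1)
      = !![t + 2*x, -w; (x^2 + t*x + d)*u, 0] * (!![0, -w; 1, -x] * M) := by
    intro x
    have hcomm : M * (α + x • (1 : Matrix (Fin 2) (Fin 2) R))
        = (!![0,-d;1,t] + x • (1 : Matrix (Fin 2) (Fin 2) R)) * M := by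
      rw [mul_add, add_mul, hg', mul_smul_comm, smul_mul_assoc, mul_one, one_mul]
    have h1x : (!![0,-d;1,t] + x • (1 : Matrix (Fin 2) (Fin 2) R)) = !![x, -d; 1, t+x] := by
      ext i j; fin_cases i <;> fin_cases j <;>
        simp [Matrix.one_apply] <;> ring
    have hE : !![0, -w; 1, -x] * !![x, -d; 1, t+x]
        = !![t + 2*x, -w; (x^2 + t*x + d)*u, 0] * !![0, -w; 1, -x] := by
      ext i j; fin_cases i <;> fin_cases j <;>
        simp [Matrix.mul_apply, Fin.sum_univ_two] <;>
        first
          | ring1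
          | linear_combination (x^2 + t*x + d) * huw
          | linear_combination 2*(x^2 + t*x + d) * huw
          | linear_combination (-(x^2 + t*x + d)) * huw
    calc (!![0, -w; 1, -x] * M) * (α + x • 1)
        = !![0, -w; 1, -x] * (M * (α + x • 1)) := by
          rw [Matrix.mul_assoc]
      _ = (!![0, -w; 1, -x] * (!![0,-d;1,t] + x • 1)) * M := by
          rw [hcomm, Matrix.mul_assoc]
      _ = (!![t + 2*x, -w; (x^2 + t*x + d)*u, 0] * !![0, -w; 1, -x]) * M := by
          rw [h1x, hE]
      _ = _ := by rw [Matrix.mul_assoc]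
  have hdet : ∀ x : R, (!![0, -w; 1, -x] * M).det = 1 := by
    intro x
    rw [Matrix.det_mul, Matrix.det_fin_two_of, ← hudef]
    linear_combination huw
  -- the unit lambda
  refine ?_
  set lam : Rˣ := ⟨-w, -u, by linear_combination huw, by linear_combination huw⟩ with hlamdef
  have hlam : (↑lam : R) = -w := rfl
  have hlaminv : (↑lam⁻¹ : R) = -u := rfl
  by_cases ht : IsUnit t
  · by_cases hd : IsUnit d
    · -- case 2
      have hw' : IsUnit w := IsUnit.of_mul_eq_one u hwu
      have h2wnil : IsNilpotent (2*w : R) := (Commute.all (2:R) w).isNilpotent_mul_right h2nil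
      have hb : IsUnit (t + 2*w) :=
        h2wnil.isUnit_add_left_of_commute ht (Commute.all _ _)
      have hcnil : IsNilpotent (d + w*t + 2*w^2) := by
        apply hmemnil
        have : d + w*t + 2*w^2 = (d-1) + ((w-1)*t + ((t-1) + 2*(1+w^2))) := by ring
        rw [this]
        refine Ideal.add_mem _ (hsub1 d hd) (Ideal.add_mem _
          (Ideal.mul_mem_right _ _ (hsub1 w hw')) (Ideal.add_mem _ (hsub1 t ht)
          (Ideal.mul_mem_right _ _ (by rw [← hram]; exact Ideal.mem_span_singleton_self _))))
      obtain ⟨x, hx⟩ := hensel_quad (t + 2*w) (d + w*t + 2*w^2) hb hcnil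
      refine ⟨x, lam, _, hdet x, Or.inr (Or.inl ⟨t + 2*x, -(x^2 + t*x + d), ?_, ?_⟩)⟩
      · rw [hlam, hlaminv]
        linear_combination u * hx - (2*x + t + 2*w) * hwu
      · have hmat : !![t + 2*x, (↑lam : R); (↑lam⁻¹ : R) * (-(x^2 + t*x + d)), 0]
            = !![t + 2*x, -w; (x^2 + t*x + d)*u, 0] := by
          rw [hlam, hlaminv]
          ext i j; fin_cases i <;> fin_cases j <;> simp <;> ring
        rw [hmat]; exact key x
    · -- case 3
      have hdnil : IsNilpotent d := hmemnil d (by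
        rwa [IsLocalRing.mem_maximalIdeal, mem_nonunits_iff])
      obtain ⟨x, hx⟩ := hensel_quad t d ht hdnil
      refine ⟨x, lam, _, hdet x, Or.inr (Or.inr ⟨t + 2*x, ?_⟩)⟩
      have h := key x
      rw [hx, zero_mul] at h
      have hmat : !![t + 2*x, (↑lam : R); 0, 0] = !![t + 2*x, -w; (0:R), 0] := by
        rw [hlam]
      rw [hmat]; exact h
  · -- case 1
    have hts : t ∈ Ideal.span {(2:R)} := by
      rw [hram, IsLocalRing.mem_maximalIdeal, mem_nonunits_iff]; exact ht
    rw [Ideal.mem_span_singleton'] at hts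
    obtain ⟨s, hs⟩ := hts
    refine ⟨-s, lam, _, hdet (-s), Or.inl ⟨-((-s)^2 + t*(-s) + d), ?_⟩⟩
    have h := key (-s)
    have hz : t + 2*(-s) = 0 := by linear_combination -hs
    rw [hz] at h
    have hmat : !![0, (↑lam : R); (↑lam⁻¹ : R) * (-((-s)^2 + t*(-s) + d)), 0]
        = !![0, -w; ((-s)^2 + t*(-s) + d)*u, 0] := by
      rw [hlam, hlaminv]
      ext i j; fin_cases i <;> fin_cases j <;> simp <;> ring
    rw [hmat]; exact h
end

section
/- In ℤ/2^r with r ≥ 2, writing l = ⌊r/2⌋ and l' = ⌈r/2⌉: if h = (1 + 2^{l'−1}x)·I ∈ SL₂(ℤ/2^r), with x ∈ ℤ/2^r, is a scalar matrix in the level-(l'−1) congruence kernel with determinant 1, then h ∈ {±I}·K^l, where K^l is the level-l congruence kernel. -/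
/-- Any square root of 1 in `ZMod (2^r)` is `≡ ±1 mod 2^l` for `l ≤ r - 1`. -/
theorem aux_sqrt_one (r l : ℕ) (hr : 2 ≤ r) (hl : l ≤ r - 1) (u : ZMod (2 ^ r))
    (hu : u * u = 1) :
    ∃ y : ZMod (2 ^ r), u = 1 + 2 ^ l * y ∨ u = -1 + 2 ^ l * y := by
  haveI : NeZero (2 ^ r) := ⟨by positivity⟩
  set n := u.val with hn
  have hun : (n : ZMod (2 ^ r)) = u := by rw [hn, ZMod.natCast_val, ZMod.cast_id]
  have hmod : n * n ≡ 1 [MOD 2 ^ r] := by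
    have : ((n * n : ℕ) : ZMod (2 ^ r)) = ((1 : ℕ) : ZMod (2 ^ r)) := by
      rw [Nat.cast_mul, hun, hu, Nat.cast_one]
    exact (ZMod.natCast_eq_natCast_iff _ _ _).mp this
  -- n is odd
  have hodd : n % 2 = 1 := by
    have h2 : n * n ≡ 1 [MOD 2] := hmod.of_dvd (dvd_pow_self 2 (by omega))
    rcases Nat.even_or_odd n with ⟨c, hc⟩ | ⟨c, hc⟩
    · exfalso
      have h2' : n * n % 2 = 1 % 2 := h2
      have he : n * n = 2 * (c * n) := by rw [hc]; ring
      omega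
    · omega
  obtain ⟨k, hk⟩ : ∃ k, n = 2 * k + 1 := ⟨n / 2, by omega⟩
  have hdvd : 2 ^ r ∣ n * n - 1 := (Nat.modEq_iff_dvd' (by nlinarith)).mp hmod.symm
  have hfac : n * n - 1 = 4 * (k * (k + 1)) := by
    have h2 : n * n = 4 * (k * (k + 1)) + 1 := by rw [hk]; ring
    omega
  have hdvd4 : 2 ^ (r - 2) ∣ k * (k + 1) := by
    have h4 : (4 : ℕ) * 2 ^ (r - 2) ∣ 4 * (k * (k + 1)) := by
      rw [← hfac]
      have : (4 : ℕ) * 2 ^ (r - 2) = 2 ^ r := by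
        rw [show (4:ℕ) = 2 ^ 2 by norm_num, ← pow_add]
        congr 1; omega
      rwa [this]
    exact (mul_dvd_mul_iff_left (by norm_num : (4:ℕ) ≠ 0)).mp h4
  have key : 2 ^ (r - 1) ∣ n - 1 ∨ 2 ^ (r - 1) ∣ n + 1 := by
    have h2r1 : (2 : ℕ) ^ (r - 1) = 2 * 2 ^ (r - 2) := by
      rw [← pow_succ']; congr 1; omega
    rcases Nat.even_or_odd k with he | ho
    · left
      have hcop : Nat.Coprime (2 ^ (r - 2)) (k + 1) :=
        Nat.Coprime.pow_left _ (by simp [Nat.coprime_two_left]; rcases he with ⟨c, hc⟩; exact ⟨c, by omega⟩)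
      have : 2 ^ (r - 2) ∣ k := hcop.dvd_of_dvd_mul_right hdvd4
      rw [h2r1, hk]
      simpa using mul_dvd_mul_left 2 this
    · right
      have hcop : Nat.Coprime (2 ^ (r - 2)) k :=
        Nat.Coprime.pow_left _ (by simp [Nat.coprime_two_left]; exact ho)
      have : 2 ^ (r - 2) ∣ k + 1 := by
        rw [mul_comm] at hdvd4
        exact hcop.dvd_of_dvd_mul_right hdvd4
      rw [h2r1, hk, show 2 * k + 1 + 1 = 2 * (k + 1) by ring]
      exact mul_dvd_mul_left 2 this
  have hpow : (2 : ℕ) ^ l ∣ 2 ^ (r - 1) := pow_dvd_pow 2 hl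
  rcases key with hd | hd
  · obtain ⟨m, hm⟩ : ∃ m, n - 1 = 2 ^ l * m := hpow.trans hd
    refine ⟨(m : ZMod (2 ^ r)), Or.inl ?_⟩
    have hn1 : n = 2 ^ l * m + 1 := by omega
    rw [← hun, hn1]
    push_cast; ring
  · obtain ⟨m, hm⟩ : ∃ m, n + 1 = 2 ^ l * m := hpow.trans hd
    refine ⟨(m : ZMod (2 ^ r)), Or.inr ?_⟩
    have : ((n + 1 : ℕ) : ZMod (2 ^ r)) = 2 ^ l * m := by rw [hm]; push_cast; ring
    push_cast [hun] at this
    linear_combination this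



/-- In `ℤ/2^r` (`r ≥ 2`, `l = ⌊r/2⌋`, `l' = ⌈r/2⌉`): if the scalar matrix
`h = (1 + 2^{l'−1}x)·I` lies in `SL₂(ℤ/2^r)` (i.e. has determinant 1), then
`h ∈ {±I}·K^l`, i.e. `1 + 2^{l'−1}x ≡ ±1 mod 2^l`. -/
theorem stmt18 (r : ℕ) (hr : 2 ≤ r) (x : ZMod (2 ^ r))
    (h : ((1 + 2 ^ (r - r / 2 - 1) * x) •
        (1 : Matrix (Fin 2) (Fin 2) (ZMod (2 ^ r)))).det = 1) :
    ∃ y : ZMod (2 ^ r),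
      1 + 2 ^ (r - r / 2 - 1) * x = 1 + 2 ^ (r / 2) * y ∨
      1 + 2 ^ (r - r / 2 - 1) * x = -1 + 2 ^ (r / 2) * y := by
  set u := 1 + 2 ^ (r - r / 2 - 1) * x with hu
  have hsq : u * u = 1 := by
    rw [Matrix.det_smul, Matrix.det_one, mul_one, Fintype.card_fin, sq] at h
    exact h
  exact aux_sqrt_one r (r / 2) hr (by omega) u hsq
end
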